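/- arXiv:2605.25526 — 2 statements merged into one kernel-verified Lean document; each statement's English description precedes it below -/
import Mathlib

section
/- For the diagonal 2-DPP on N = 3, for every nonzero vector u ∈ ℝ³ with u₁ + u₂ + u₃ = 0, the quadratic form uᵀG(θ)u is strictly positive; equivalently uᵀG(θ)u equals the variance Var(Σᵢ uᵢ 1_{i∈A}) under the 2-DPP, which is positive for u ∉ ℝ𝟙. Hence G(θ) has rank exactly 2. -/
set_option maxHeartbeats 1000000

open Matrix

/-- Positivity of the Fisher quadratic form on the hyperplane `𝟙⊥` for the
diagonal 2-DPP on `N = 3`, and rank exactly 2. -/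
theorem fisher_information_positive_on_hyperplane
    (θ : Fin 3 → ℝ) (s : Fin 3 → ℝ) (hs : ∀ i, s i = Real.exp (θ i))
    (e₂ : ℝ) (he₂ : e₂ = s 0 * s 1 + s 0 * s 2 + s 1 * s 2)
    (η : Fin 3 → ℝ) (hη : ∀ i, η i = s i * ((s 0 + s 1 + s 2) - s i) / e₂)
    (π : Fin 3 → Fin 3 → ℝ) (hπ : ∀ i j, π i j = s i * s j / e₂)
    (G : Matrix (Fin 3) (Fin 3) ℝ)
    (hG : G = Matrix.of (fun i j =>
      if i = j then η i * (1 - η i) else π i j - η i * η j)) :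
    (∀ u : Fin 3 → ℝ, u ≠ 0 → u 0 + u 1 + u 2 = 0 →
      0 < u ⬝ᵥ G.mulVec u) ∧ G.rank = 2 := by
  have hs0 : 0 < s 0 := by rw [hs]; exact Real.exp_pos _
  have hs1 : 0 < s 1 := by rw [hs]; exact Real.exp_pos _
  have hs2 : 0 < s 2 := by rw [hs]; exact Real.exp_pos _
  have he2pos : 0 < e₂ := by rw [he₂]; positivity
  have he2ne : e₂ ≠ 0 := ne_of_gt he2pos
  have hηe : ∀ i, η i * e₂ = s i * ((s 0 + s 1 + s 2) - s i) := by
    intro i; rw [hη i]; field_simp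
  have hπe : ∀ i j, π i j * e₂ = s i * s j := by
    intro i j; rw [hπ i j]; field_simp
  -- entrywise formulas after clearing denominators
  have keyd : ∀ i, G i i * e₂ ^ 2 =
      (s i * ((s 0 + s 1 + s 2) - s i)) * (e₂ - s i * ((s 0 + s 1 + s 2) - s i)) := by
    intro i
    calc G i i * e₂ ^ 2 = (η i * e₂) * (e₂ - η i * e₂) := by
          rw [hG]; simp only [Matrix.of_apply, if_true]; ring
      _ = _ := by rw [hηe i]
  have keyo : ∀ i j, i ≠ j → G i j * e₂ ^ 2 =
      s i * s j * e₂ - (s i * ((s 0 + s 1 + s 2) - s i)) * (s j * ((s 0 + s 1 + s 2) - s j)) := by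
    intro i j hij
    calc G i j * e₂ ^ 2 = (π i j * e₂) * e₂ - (η i * e₂) * (η j * e₂) := by
          rw [hG]; simp only [Matrix.of_apply]; rw [if_neg hij]; ring
      _ = _ := by rw [hηe i, hηe j, hπe i j]
  -- key identity for the quadratic form on the hyperplane
  have hquad : ∀ u : Fin 3 → ℝ, u 0 + u 1 + u 2 = 0 →
      (u ⬝ᵥ G.mulVec u) * e₂ ^ 2 =
        s 0 * s 1 * s 2 *
          (s 2 * (u 0 - u 1) ^ 2 + s 1 * (2 * u 0 + u 1) ^ 2
            + s 0 * (u 0 + 2 * u 1) ^ 2) := by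
    intro u hsum
    have hu2 : u 2 = -(u 0 + u 1) := by linarith
    have expand : (u ⬝ᵥ G.mulVec u) * e₂ ^ 2 =
        u 0 * u 0 * (G 0 0 * e₂ ^ 2) + u 0 * u 1 * (G 0 1 * e₂ ^ 2)
        + u 0 * u 2 * (G 0 2 * e₂ ^ 2) + u 1 * u 0 * (G 1 0 * e₂ ^ 2)
        + u 1 * u 1 * (G 1 1 * e₂ ^ 2) + u 1 * u 2 * (G 1 2 * e₂ ^ 2)
        + u 2 * u 0 * (G 2 0 * e₂ ^ 2) + u 2 * u 1 * (G 2 1 * e₂ ^ 2)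
        + u 2 * u 2 * (G 2 2 * e₂ ^ 2) := by
      simp only [dotProduct, mulVec, dotProduct, Fin.sum_univ_three]
      ring
    rw [expand, keyd 0, keyd 1, keyd 2,
      keyo 0 1 (by decide), keyo 0 2 (by decide), keyo 1 0 (by decide),
      keyo 1 2 (by decide), keyo 2 0 (by decide), keyo 2 1 (by decide),
      hu2, he₂]
    ring
  -- positivity on the hyperplane
  have hpos : ∀ u : Fin 3 → ℝ, u ≠ 0 → u 0 + u 1 + u 2 = 0 →
      0 < u ⬝ᵥ G.mulVec u := by
    intro u hu hsum
    have h := hquad u hsum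
    have habc : (2 * u 0 + u 1 ≠ 0) ∨ (u 0 + 2 * u 1 ≠ 0) := by
      by_contra hc
      push_neg at hc
      obtain ⟨h1, h2⟩ := hc
      apply hu
      funext i
      fin_cases i
      · show u 0 = 0; linarith
      · show u 1 = 0; linarith
      · show u 2 = 0; linarith
    have hbr : 0 < s 2 * (u 0 - u 1) ^ 2 + s 1 * (2 * u 0 + u 1) ^ 2
        + s 0 * (u 0 + 2 * u 1) ^ 2 := by
      have t1 : 0 ≤ s 2 * (u 0 - u 1) ^ 2 := by positivity
      rcases habc with hB | hC
      · have t2 : 0 < s 1 * (2 * u 0 + u 1) ^ 2 := by positivity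
        have t3 : 0 ≤ s 0 * (u 0 + 2 * u 1) ^ 2 := by positivity
        linarith
      · have t2 : 0 ≤ s 1 * (2 * u 0 + u 1) ^ 2 := by positivity
        have t3 : 0 < s 0 * (u 0 + 2 * u 1) ^ 2 := by positivity
        linarith
    have hQ : 0 < (u ⬝ᵥ G.mulVec u) * e₂ ^ 2 := by
      rw [h]; positivity
    have hsq : 0 < e₂ ^ 2 := pow_pos he2pos 2
    nlinarith [hQ, hsq]
  refine ⟨hpos, ?_⟩
  -- row sums of G vanish
  have hrow0 : G 0 0 + G 0 1 + G 0 2 = 0 := by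
    have h : (G 0 0 + G 0 1 + G 0 2) * e₂ ^ 2 = 0 := by
      have e1 := keyd 0
      have e2' := keyo 0 1 (by decide)
      have e3 := keyo 0 2 (by decide)
      rw [he₂] at e1 e2' e3
      rw [he₂]
      linear_combination e1 + e2' + e3
    exact (mul_eq_zero.mp h).resolve_right (pow_ne_zero _ he2ne)
  have hrow1 : G 1 0 + G 1 1 + G 1 2 = 0 := by
    have h : (G 1 0 + G 1 1 + G 1 2) * e₂ ^ 2 = 0 := by
      have e1 := keyd 1
      have e2' := keyo 1 0 (by decide)
      have e3 := keyo 1 2 (by decide)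
      rw [he₂] at e1 e2' e3
      rw [he₂]
      linear_combination e1 + e2' + e3
    exact (mul_eq_zero.mp h).resolve_right (pow_ne_zero _ he2ne)
  have hrow2 : G 2 0 + G 2 1 + G 2 2 = 0 := by
    have h : (G 2 0 + G 2 1 + G 2 2) * e₂ ^ 2 = 0 := by
      have e1 := keyd 2
      have e2' := keyo 2 0 (by decide)
      have e3 := keyo 2 1 (by decide)
      rw [he₂] at e1 e2' e3
      rw [he₂]
      linear_combination e1 + e2' + e3
    exact (mul_eq_zero.mp h).resolve_right (pow_ne_zero _ he2ne)
  -- the all-ones vector is in the kernel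
  have hker1 : G.mulVec (fun _ => (1 : ℝ)) = 0 := by
    funext i
    simp only [mulVec, dotProduct, Fin.sum_univ_three, mul_one, Pi.zero_apply]
    fin_cases i
    · exact hrow0
    · exact hrow1
    · exact hrow2
  -- kernel is exactly the span of the all-ones vector
  have hkerEq : LinearMap.ker G.mulVecLin
      = Submodule.span ℝ {(fun _ => (1 : ℝ) : Fin 3 → ℝ)} := by
    apply le_antisymm
    · intro v hv
      have hv' : G.mulVec v = 0 := hv
      set c : ℝ := (v 0 + v 1 + v 2) / 3 with hc
      set w : Fin 3 → ℝ := fun i => v i - c with hw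
      have hwsum : w 0 + w 1 + w 2 = 0 := by simp [hw, hc]; ring
      have hGw : G.mulVec w = 0 := by
        have hwv : w = v - c • (fun _ => (1 : ℝ)) := by
          funext i; simp [hw]
        rw [hwv, Matrix.mulVec_sub, hv', Matrix.mulVec_smul, hker1]
        simp
      have hw0 : w = 0 := by
        by_contra hne
        have := hpos w hne hwsum
        rw [hGw] at this
        simp at this
      have hvc : v = c • (fun _ => (1 : ℝ) : Fin 3 → ℝ) := by
        funext i
        have h := congrFun hw0 i
        simp only [hw, Pi.zero_apply] at h
        simp only [Pi.smul_apply, smul_eq_mul, mul_one]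
        linarith
      rw [hvc]
      exact Submodule.smul_mem _ _ (Submodule.mem_span_singleton_self _)
    · rw [Submodule.span_le]
      intro x hx
      simp only [Set.mem_singleton_iff] at hx
      subst hx
      exact hker1
  have hkerdim : Module.finrank ℝ (LinearMap.ker G.mulVecLin) = 1 := by
    rw [hkerEq]
    exact finrank_span_singleton (by
      intro h
      have := congrFun h 0
      simp at this)
  have hrn := LinearMap.finrank_range_add_finrank_ker G.mulVecLin
  rw [hkerdim] at hrn
  simp [Module.finrank_pi] at hrn
  have hdef : G.rank = Module.finrank ℝ (LinearMap.range G.mulVecLin) := rfl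
  omega
end

section
/- Let L = UΛUᵀ with U ∈ O(N), Λ = diag(λ₁,…,λ_N) ≥ 0, and Z_k(L) > 0. For any c > 0, any sign matrix D ∈ {diag(ε₁,…,ε_N) : εᵢ = ±1}, and any Q ∈ O(N) commuting with Λ (QΛQᵀ = Λ), the reconstructed kernel M = (DUQ)(cΛ)(DUQ)ᵀ satisfies M = c·DLD and induces the same k-DPP: P^k_M = P^k_L. -/
open Matrix Finset

/-- Principal minor of `L` indexed by the finset `A`. -/
noncomputable def principalMinor {N : ℕ} (L : Matrix (Fin N) (Fin N) ℝ)
    (A : Finset (Fin N)) : ℝ :=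
  (L.submatrix (fun i : A => i.1) (fun j : A => j.1)).det

/-- Explicit invariances of the `k`-DPP via the spectral transformation
`M = (DUQ)(cΛ)(DUQ)ᵀ`: `M = c·DLD` and `P^k_M = P^k_L`. -/
theorem kDPP_spectral_invariances
    {N k : ℕ}
    (U : Matrix (Fin N) (Fin N) ℝ) (hU : U * Uᵀ = 1)
    (lam : Fin N → ℝ) (hlam : ∀ i, 0 ≤ lam i)
    (L : Matrix (Fin N) (Fin N) ℝ)
    (hL : L = U * Matrix.diagonal lam * Uᵀ)
    (hZ : 0 < ∑ B ∈ Finset.powersetCard k (Finset.univ : Finset (Fin N)),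
      principalMinor L B)
    (c : ℝ) (hc : 0 < c)
    (ε : Fin N → ℝ) (hε : ∀ i, ε i = 1 ∨ ε i = -1)
    (D : Matrix (Fin N) (Fin N) ℝ) (hD : D = Matrix.diagonal ε)
    (Q : Matrix (Fin N) (Fin N) ℝ) (hQ : Q * Qᵀ = 1)
    (hQΛ : Q * Matrix.diagonal lam * Qᵀ = Matrix.diagonal lam)
    (M : Matrix (Fin N) (Fin N) ℝ)
    (hM : M = (D * U * Q) * (c • Matrix.diagonal lam) * (D * U * Q)ᵀ) :
    M = c • (D * L * D) ∧
      ∀ A ∈ Finset.powersetCard k (Finset.univ : Finset (Fin N)),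
        principalMinor M A /
            (∑ B ∈ Finset.powersetCard k (Finset.univ : Finset (Fin N)),
              principalMinor M B) =
          principalMinor L A /
            (∑ B ∈ Finset.powersetCard k (Finset.univ : Finset (Fin N)),
              principalMinor L B) := by
  have hDt : Dᵀ = D := by rw [hD, Matrix.diagonal_transpose]
  have hM' : M = c • (D * L * D) := by
    rw [hM, hL, transpose_mul, transpose_mul, hDt]
    rw [Matrix.mul_smul, Matrix.smul_mul]
    congr 1
    have : D * U * Q * Matrix.diagonal lam * (Qᵀ * (Uᵀ * D))
        = (D * U) * (Q * Matrix.diagonal lam * Qᵀ) * (Uᵀ * D) := by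
      simp only [mul_assoc]
    rw [this, hQΛ]
    simp only [mul_assoc]
  -- principal minors of D*L*D equal those of L
  have pmD : ∀ A : Finset (Fin N), principalMinor (D * L * D) A = principalMinor L A := by
    intro A
    unfold principalMinor
    have hdet : ((D * L * D).submatrix (fun i : A => i.1) (fun j : A => j.1))
        = Matrix.diagonal (fun i : A => ε i.1)
          * (L.submatrix (fun i : A => i.1) (fun j : A => j.1))
          * Matrix.diagonal (fun i : A => ε i.1) := by
      ext i j
      simp [hD, Matrix.mul_diagonal, Matrix.diagonal_mul, Matrix.submatrix_apply]
    rw [hdet, Matrix.det_mul, Matrix.det_mul, Matrix.det_diagonal]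
    have hp : (∏ i : A, ε i.1) * (∏ i : A, ε i.1) = 1 := by
      rw [← Finset.prod_mul_distrib]
      apply Finset.prod_eq_one
      intro i _
      rcases hε i.1 with h | h <;> rw [h] <;> norm_num
    set p := (∏ i : A, ε i.1)
    set d := (L.submatrix (fun i : A => i.1) (fun j : A => j.1)).det
    have hr : p * d * p = p * p * d := by ring
    rw [hr, hp, one_mul]
  -- principal minors of M
  have pmM : ∀ A : Finset (Fin N), principalMinor M A = c ^ A.card * principalMinor L A := by
    intro A
    rw [hM', ← pmD A]
    unfold principalMinor
    have hs : (c • (D * L * D)).submatrix (fun i : A => i.1) (fun j : A => j.1)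
        = c • ((D * L * D).submatrix (fun i : A => i.1) (fun j : A => j.1)) := rfl
    rw [hs, Matrix.det_smul, Fintype.card_coe]
  refine ⟨hM', ?_⟩
  intro A hA
  have hcardA : A.card = k := (Finset.mem_powersetCard.mp hA).2
  have hsum : (∑ B ∈ Finset.powersetCard k (Finset.univ : Finset (Fin N)), principalMinor M B)
      = c ^ k * ∑ B ∈ Finset.powersetCard k (Finset.univ : Finset (Fin N)), principalMinor L B := by
    rw [Finset.mul_sum]
    apply Finset.sum_congr rfl
    intro B hB
    rw [pmM B, (Finset.mem_powersetCard.mp hB).2]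
  rw [pmM A, hcardA, hsum]
  exact mul_div_mul_left _ _ (pow_ne_zero _ hc.ne')
end
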